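/- arXiv:math/0612327 — 4 statements merged into one kernel-verified Lean document; each statement's English description precedes it below -/
import Mathlib

section
/- Let M be an additive commutative monoid, B an additive commutative group, and let γ : M → G be the group completion of M (the canonical map from M to its Grothendieck group, i.e. the localization of M at the top additive submonoid). Then every polynomial map f : M → B extends uniquely to a polynomial map F : G → B with F ∘ γ = f; that is, such an F exists, has the same degree bound as f, and any two polynomial maps G → B extending f are equal. -/
/-- A map `f : M → B` has degree `≤ 0` if it is constant, and degree `≤ n + 1` if for every
`a : M` the map `x ↦ f (x + a) - f x - f a` has degree `≤ n`. -/
def PolyDegLE {M B : Type*} [AddCommMonoid M] [AddCommGroup B] : ℕ → (M → B) → Prop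
  | 0, f => ∃ b, ∀ x, f x = b
  | n + 1, f => ∀ a : M, PolyDegLE n fun x => f (x + a) - f x - f a

/-- A map is polynomial if it has degree `≤ n` for some natural number `n`. -/
def IsPolynomialMap {M B : Type*} [AddCommMonoid M] [AddCommGroup B] (f : M → B) : Prop :=
  ∃ n, PolyDegLE n f

/-!
Every `g` in the group completion satisfies `g + γ b = γ a` for some `a b : M`. Uniqueness: if a
polynomial `P` vanishes on `γ M`, so does its polarization `g ↦ P (g + γ b) - P g - P (γ b)`, which
has lower degree; by induction it vanishes, and at `g` it equals `-P g`.

Existence, by induction on the degree: extend each polarization `x ↦ f (x + b) - f x - f b` to a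
map `D b` of lower degree. An extension `F` of `f` must satisfy `F g = f a - f b - D b g`. By
uniqueness, `D b (g + γ c) + D c g` is symmetric in `b` and `c` (both sides extend
`x ↦ f (x + b + c) - f x - f b - f c`); this makes `F` well defined and shows that its polarization
in direction `γ c` is `D c`. The directions in which the polarization of `F` has lower degree form a
subgroup containing `γ M`, hence all of the group completion.
-/

section PolynomialMaps

variable {M B : Type*} [AddCommMonoid M] [AddCommGroup B]

def polarization (f : M → B) (a x : M) : B := f (x + a) - f x - f a

theorem polyDegLE_succ_iff {n : ℕ} {f : M → B} :
    PolyDegLE (n + 1) f ↔ ∀ a, PolyDegLE n (polarization f a) :=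
  Iff.rfl

theorem polarization_add (f g : M → B) (a : M) :
    polarization (f + g) a = polarization f a + polarization g a := by
  funext x
  simp only [polarization, Pi.add_apply]
  abel

theorem polarization_neg (f : M → B) (a : M) : polarization (-f) a = -polarization f a := by
  funext x
  simp only [polarization, Pi.neg_apply]
  abel

theorem polarization_const (b : B) (a : M) :
    polarization (fun _ : M => b) a = fun _ => b - b - b :=
  rfl

theorem polarization_comp_add_right (f : M → B) (a c : M) :
    polarization (fun x => f (x + c)) a =
      fun x => polarization f a (x + c) + (f a - f (a + c)) := by
  funext x
  simp only [polarization, add_right_comm x a c]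
  abel

namespace PolyDegLE

variable {n : ℕ} {f g : M → B}

theorem const : ∀ (n : ℕ) (b : B), PolyDegLE n (fun _ : M => b)
  | 0, b => ⟨b, fun _ => rfl⟩
  | n + 1, b => polyDegLE_succ_iff.2 fun a => polarization_const b a ▸ const n _

theorem add : ∀ {n : ℕ} {f g : M → B}, PolyDegLE n f → PolyDegLE n g → PolyDegLE n (f + g)
  | 0, _, _, ⟨b, hb⟩, ⟨c, hc⟩ => ⟨b + c, fun x => by rw [Pi.add_apply, hb, hc]⟩
  | _ + 1, f, g, hf, hg => polyDegLE_succ_iff.2 fun a => by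
      rw [polarization_add]
      exact (hf a).add (hg a)

theorem neg : ∀ {n : ℕ} {f : M → B}, PolyDegLE n f → PolyDegLE n (-f)
  | 0, _, ⟨b, hb⟩ => ⟨-b, fun x => by rw [Pi.neg_apply, hb]⟩
  | _ + 1, f, hf => polyDegLE_succ_iff.2 fun a => by
      rw [polarization_neg]
      exact (hf a).neg

theorem sub (hf : PolyDegLE n f) (hg : PolyDegLE n g) : PolyDegLE n (f - g) :=
  sub_eq_add_neg f g ▸ hf.add hg.neg

theorem comp_add_right : ∀ {n : ℕ} {f : M → B}, PolyDegLE n f →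
    ∀ c, PolyDegLE n (fun x => f (x + c))
  | 0, _, ⟨b, hb⟩, c => ⟨b, fun x => hb (x + c)⟩
  | _ + 1, f, hf, c => polyDegLE_succ_iff.2 fun a => by
      rw [polarization_comp_add_right]
      exact ((hf a).comp_add_right c).add (const _ _)

theorem succ : ∀ {n : ℕ} {f : M → B}, PolyDegLE n f → PolyDegLE (n + 1) f
  | 0, f, ⟨b, hb⟩ => by
      obtain rfl : f = fun _ => b := funext hb
      exact const 1 b
  | _ + 1, _, hf => fun a => (hf a).succ

theorem mono {m : ℕ} (hf : PolyDegLE n f) (h : n ≤ m) : PolyDegLE m f := by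
  induction h with
  | refl => exact hf
  | step _ ih => exact ih.succ

theorem apply_eq_of_add_eq_add : ∀ {n : ℕ} {f : M → B}, PolyDegLE n f →
    ∀ {x y c : M}, x + c = y + c → f x = f y
  | 0, _, ⟨b, hb⟩, x, y, _, _ => (hb x).trans (hb y).symm
  | _ + 1, f, hf, x, y, c, h => by
      have hc : polarization f c x = polarization f c y := (hf c).apply_eq_of_add_eq_add h
      simpa only [polarization, h, sub_left_inj, sub_right_inj] using hc

end PolyDegLE

section Uniqueness

variable {G : Type*} [AddCommMonoid G] (φ : (⊤ : AddSubmonoid M).LocalizationMap G)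

theorem PolyDegLE.eq_zero_of_comp_eq_zero : ∀ {n : ℕ} {P : G → B}, PolyDegLE n P →
    (∀ x, P (φ x) = 0) → P = 0
  | 0, P, ⟨b, hb⟩, h => funext fun g => by rw [hb, ← hb (φ 0), h, Pi.zero_apply]
  | _ + 1, P, hP, h => funext fun g => by
      obtain ⟨⟨a, b⟩, hab⟩ := φ.surj g
      have hpol : polarization P (φ b) = 0 :=
        (polyDegLE_succ_iff.1 hP (φ b)).eq_zero_of_comp_eq_zero fun x => by
          rw [polarization, ← map_add, h, h, h, sub_self, sub_self]
      have hg := congrFun hpol g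
      rw [polarization, hab, h, h, Pi.zero_apply] at hg
      simpa using hg

theorem PolyDegLE.eq_of_comp_eq {n : ℕ} {P Q : G → B} (hP : PolyDegLE n P) (hQ : PolyDegLE n Q)
    (h : P ∘ φ = Q ∘ φ) : P = Q :=
  sub_eq_zero.1 <| (hP.sub hQ).eq_zero_of_comp_eq_zero φ fun x => sub_eq_zero.2 (congrFun h x)

theorem IsPolynomialMap.eq_of_comp_eq {P Q : G → B} (hP : IsPolynomialMap P)
    (hQ : IsPolynomialMap Q) (h : P ∘ φ = Q ∘ φ) : P = Q := by
  obtain ⟨m, hm⟩ := hP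
  obtain ⟨n, hn⟩ := hQ
  exact (hm.mono (le_max_left m n)).eq_of_comp_eq φ (hn.mono (le_max_right m n)) h

theorem PolyDegLE.apply_eq_of_map_eq {n : ℕ} {f : M → B} (hf : PolyDegLE n f) {x y : M}
    (h : φ x = φ y) : f x = f y := by
  obtain ⟨c, hc⟩ := φ.exists_of_eq h
  exact hf.apply_eq_of_add_eq_add (c := c) (by rw [add_comm x, add_comm y, hc])

end Uniqueness

section Extension

variable {G : Type*} [AddCommGroup G] (φ : (⊤ : AddSubmonoid M).LocalizationMap G)

theorem polarization_add_left (F : G → B) (α β g : G) :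
    polarization F (α + β) g =
      polarization F α (g + β) + polarization F β g + (F α + F β - F (α + β)) := by
  simp only [polarization, add_assoc, add_comm β α]
  abel

theorem polarization_neg_left (F : G → B) (α g : G) :
    polarization F (-α) g = -polarization F α (g + -α) - (F α + F (-α)) := by
  simp only [polarization, neg_add_cancel_right]
  abel

theorem PolyDegLE.polarization_add_left {n : ℕ} {F : G → B} {α β : G}
    (hα : PolyDegLE n (polarization F α)) (hβ : PolyDegLE n (polarization F β)) :
    PolyDegLE n (polarization F (α + β)) := by
  rw [funext (_root_.polarization_add_left F α β)]
  exact ((hα.comp_add_right β).add hβ).add (const n _)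

theorem PolyDegLE.polarization_neg_left {n : ℕ} {F : G → B} {α : G}
    (hα : PolyDegLE n (polarization F α)) : PolyDegLE n (polarization F (-α)) := by
  rw [funext (_root_.polarization_neg_left F α)]
  exact (hα.comp_add_right (-α)).neg.sub (const n _)

theorem polyDegLE_succ_of_polarization_map {n : ℕ} {F : G → B}
    (h : ∀ c, PolyDegLE n (polarization F (φ c))) : PolyDegLE (n + 1) F := by
  refine polyDegLE_succ_iff.2 fun α => ?_
  obtain ⟨⟨a, b⟩, hab⟩ := φ.surj α
  rw [eq_sub_of_add_eq hab, sub_eq_add_neg]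
  exact (h a).polarization_add_left (h b).polarization_neg_left

variable {n : ℕ} {f : M → B} {D : M → G → B}

theorem polarization_lift_symm (hD : ∀ b, PolyDegLE n (D b))
    (hDf : ∀ b x, D b (φ x) = polarization f b x) (b c : M) (g : G) :
    D b (g + φ c) + D c g = D c (g + φ b) + D b g := by
  have hbc : PolyDegLE n (fun g => D b (g + φ c) + D c g) := ((hD b).comp_add_right _).add (hD c)
  have hcb : PolyDegLE n (fun g => D c (g + φ b) + D b g) := ((hD c).comp_add_right _).add (hD b)
  refine congrFun (hbc.eq_of_comp_eq φ hcb (funext fun x => ?_)) g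
  simp only [Function.comp_apply, ← map_add, hDf, polarization, add_right_comm x c b]
  abel

noncomputable def extendOfPolarizationLift (f : M → B) (D : M → G → B) (g : G) : B :=
  f (φ.sec g).1 - f (φ.sec g).2 - D (φ.sec g).2 g

theorem extendOfPolarizationLift_eq (hf : PolyDegLE (n + 1) f) (hD : ∀ b, PolyDegLE n (D b))
    (hDf : ∀ b x, D b (φ x) = polarization f b x) {g : G} {a b : M} (hab : g + φ b = φ a) :
    extendOfPolarizationLift φ f D g = f a - f b - D b g := by
  have hsec : g + φ (φ.sec g).2 = φ (φ.sec g).1 := φ.sec_spec g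
  have hsymm := polarization_lift_symm φ hD hDf b (φ.sec g).2 g
  rw [hsec, hab, hDf, hDf] at hsymm
  have hcross : f (a + (φ.sec g).2) = f ((φ.sec g).1 + b) := hf.apply_eq_of_map_eq φ <| by
    rw [map_add, map_add, ← hab, ← hsec, add_right_comm]
  simp only [polarization, hcross] at hsymm
  rw [extendOfPolarizationLift]
  linear_combination (norm := abel) -hsymm

theorem extendOfPolarizationLift_map (hf : PolyDegLE (n + 1) f) (hD : ∀ b, PolyDegLE n (D b))
    (hDf : ∀ b x, D b (φ x) = polarization f b x) (x : M) :
    extendOfPolarizationLift φ f D (φ x) = f x := by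
  rw [extendOfPolarizationLift_eq φ hf hD hDf (a := x) (b := 0) (by rw [map_zero, add_zero]), hDf,
    polarization, add_zero]
  abel

theorem polarization_extendOfPolarizationLift_map (hf : PolyDegLE (n + 1) f)
    (hD : ∀ b, PolyDegLE n (D b)) (hDf : ∀ b x, D b (φ x) = polarization f b x) (c : M) :
    polarization (extendOfPolarizationLift φ f D) (φ c) = D c := by
  funext g
  have hsec : g + φ (φ.sec g).2 = φ (φ.sec g).1 := φ.sec_spec g
  have hsymm := polarization_lift_symm φ hD hDf (φ.sec g).2 c g
  rw [hsec, hDf] at hsymm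
  rw [polarization, extendOfPolarizationLift_map φ hf hD hDf,
    extendOfPolarizationLift_eq φ hf hD hDf (by rw [add_right_comm, hsec, map_add]),
    extendOfPolarizationLift_eq φ hf hD hDf hsec]
  simp only [polarization] at hsymm
  linear_combination (norm := abel) -hsymm

theorem polyDegLE_extendOfPolarizationLift (hf : PolyDegLE (n + 1) f)
    (hD : ∀ b, PolyDegLE n (D b)) (hDf : ∀ b x, D b (φ x) = polarization f b x) :
    PolyDegLE (n + 1) (extendOfPolarizationLift φ f D) :=
  polyDegLE_succ_of_polarization_map φ fun c => by
    rw [polarization_extendOfPolarizationLift_map φ hf hD hDf]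
    exact hD c

theorem PolyDegLE.exists_extension : ∀ {n : ℕ} {f : M → B}, PolyDegLE n f →
    ∃ F : G → B, PolyDegLE n F ∧ F ∘ φ = f
  | 0, _, ⟨b, hb⟩ => ⟨fun _ => b, const 0 b, funext fun x => (hb x).symm⟩
  | _ + 1, f, hf => by
      choose D hD hDf using fun b => (polyDegLE_succ_iff.1 hf b).exists_extension
      have hDf' : ∀ b x, D b (φ x) = polarization f b x := fun b => congrFun (hDf b)
      exact ⟨_, polyDegLE_extendOfPolarizationLift φ hf hD hDf',
        funext (extendOfPolarizationLift_map φ hf hD hDf')⟩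

end Extension

end PolynomialMaps

/-- Every polynomial map `f : M → B` from an additive commutative monoid `M` to an additive
commutative group `B` extends uniquely to a polynomial map on the group completion
`G = AddLocalization (⊤ : AddSubmonoid M)` of `M`, with the same degree bound; uniqueness holds
among all polynomial maps `G → B` extending `f` along the canonical map `γ`. -/
theorem stmt0 {M B : Type*} [AddCommMonoid M] [AddCommGroup B]
    (γ : M → AddLocalization (⊤ : AddSubmonoid M))
    (hγ : γ = fun x => AddLocalization.mk x 0)
    (f : M → B) (n : ℕ) (hf : PolyDegLE n f) :
    (∃ F : AddLocalization (⊤ : AddSubmonoid M) → B, PolyDegLE n F ∧ F ∘ γ = f) ∧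
      ∀ F₁ F₂ : AddLocalization (⊤ : AddSubmonoid M) → B,
        IsPolynomialMap F₁ → IsPolynomialMap F₂ → F₁ ∘ γ = f → F₂ ∘ γ = f → F₁ = F₂ := by
  subst hγ
  exact ⟨hf.exists_extension (AddLocalization.addMonoidOf ⊤),
    fun _ _ h₁ h₂ e₁ e₂ => h₁.eq_of_comp_eq (AddLocalization.addMonoidOf ⊤) h₂ (e₁.trans e₂.symm)⟩
end

section
/- Let p, q be natural numbers, X and Y types, and G = Equiv.Perm (Fin p ⊕ Fin q), acting on functions f : Fin p ⊕ Fin q → X ⊕ Y by σ • f = f ∘ σ⁻¹. Let L be the subgroup of G which is the image of Equiv.Perm (Fin p) × Equiv.Perm (Fin q) under the sum-congruence embedding (the Young subgroup S_p × S_q), and let H be any subgroup of G. Let A^{p,q} denote the set of H-orbits of those functions f : Fin p ⊕ Fin q → X ⊕ Y for which exactly p elements of Fin p ⊕ Fin q are sent by f into the left summand X. Fix a set T of representatives σ ∈ G for the double cosets L\G/H. Then A^{p,q} is in bijection with the disjoint union, over σ ∈ T, of the orbit spaces of (Fin p → X) × (Fin q → Y) under the action of the subgroup L ∩ σHσ⁻¹,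 where an element of L ∩ σHσ⁻¹, written via the Young embedding as a pair (a, b) with a ∈ Equiv.Perm (Fin p) and b ∈ Equiv.Perm (Fin q), acts on (u, v) by ((u ∘ a⁻¹), (v ∘ b⁻¹)). -/
/-!
Every `f : Fin p ⊕ Fin q → X ⊕ Y` with exactly `p` values in `X` factors as `Sum.map u v ∘ σ`,
and two factorisations differ by an element `l` of the Young subgroup `L`, acting on `σ` on the
left and on `(u, v)` on the right. So the `H`-orbits of such `f` are the orbits of `L × H` on the
pairs `(σ, (u, v))`. Moving `σ` to the representative `t` of its double coset `LσH`, what is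
left of the `L × H`-freedom is the stabiliser of `t`, namely `L ∩ tHt⁻¹`, acting on `(u, v)`.
-/

/-- The orbit equivalence relation on those functions `f : α → Z` satisfying `P`, for the
action of a subgroup `H` of `Equiv.Perm α` given by `σ • f = f ∘ ⇑σ⁻¹`. -/
def permSetoidOn {α Z : Type*} (H : Subgroup (Equiv.Perm α)) (P : (α → Z) → Prop) :
    Setoid {f : α → Z // P f} where
  r f g := ∃ σ ∈ H, (g : α → Z) = (f : α → Z) ∘ ⇑σ⁻¹
  iseqv := by
    refine ⟨fun f => ⟨1, H.one_mem, by simp⟩, ?_, ?_⟩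
    · rintro f g ⟨σ, hσ, h⟩
      exact ⟨σ⁻¹, H.inv_mem hσ, by rw [h]; ext x; simp⟩
    · rintro f g h ⟨σ, hσ, h1⟩ ⟨τ, hτ, h2⟩
      exact ⟨τ * σ, H.mul_mem hτ hσ, by rw [h2, h1]; ext x; simp⟩

/-- The orbit equivalence relation on `(Fin p → X) × (Fin q → Y)` under the subgroup
`W ≤ Equiv.Perm (Fin p ⊕ Fin q)`: two pairs are equivalent when they differ by an element of
`W` of the form `Equiv.sumCongr a b` (necessarily in the Young subgroup `S_p × S_q`), acting by
`(a, b) • (u, v) = (u ∘ ⇑a⁻¹, v ∘ ⇑b⁻¹)`. -/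
def prodPermSetoid (p q : ℕ) (X Y : Type*) (W : Subgroup (Equiv.Perm (Fin p ⊕ Fin q))) :
    Setoid ((Fin p → X) × (Fin q → Y)) where
  r uv uv' := ∃ (a : Equiv.Perm (Fin p)) (b : Equiv.Perm (Fin q)),
      Equiv.Perm.sumCongrHom (Fin p) (Fin q) (a, b) ∈ W ∧
        uv'.1 = uv.1 ∘ ⇑a⁻¹ ∧ uv'.2 = uv.2 ∘ ⇑b⁻¹
  iseqv := by
    refine ⟨fun uv => ⟨1, 1, by simpa using W.one_mem, by simp, by simp⟩, ?_, ?_⟩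
    · rintro uv uv' ⟨a, b, hW, h1, h2⟩
      refine ⟨a⁻¹, b⁻¹, ?_, by rw [h1]; ext x; simp, by rw [h2]; ext x; simp⟩
      simpa using W.inv_mem hW
    · rintro uv uv' uv'' ⟨a, b, hW, h1, h2⟩ ⟨a', b', hW', h1', h2'⟩
      refine ⟨a' * a, b' * b, ?_, by rw [h1', h1]; ext x; simp, by rw [h2', h2]; ext x; simp⟩
      simpa using W.mul_mem hW' hW

open Equiv Finset

theorem Sum.map_comp_sumCongr {α β X Y : Type*} (u : α → X) (v : β → Y) (a : Perm α)
    (b : Perm β) : Sum.map u v ∘ ⇑(Perm.sumCongr a b) = Sum.map (u ∘ a) (v ∘ b) :=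
  Sum.map_comp_map u v a b

theorem Sum.exists_eq_sumCongr_of_map_eq_map_comp {α β X Y : Type*} [Finite α] [Finite β]
    {u u' : α → X} {v v' : β → Y} {e : Perm (α ⊕ β)}
    (h : Sum.map u' v' = Sum.map u v ∘ e) :
    ∃ (a : Perm α) (b : Perm β), e = Perm.sumCongr a b ∧ u' = u ∘ a ∧ v' = v ∘ b := by
  have he : e ∈ (Perm.sumCongrHom α β).range := by
    refine Perm.mem_sumCongrHom_range_of_perm_mapsTo_inl ?_
    rintro _ ⟨i, rfl⟩
    have hl : (e (.inl i)).isLeft := by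
      simpa only [Function.comp_apply, Sum.isLeft_map, Sum.map_inl, Sum.isLeft_inl] using
        (congrArg Sum.isLeft (congrFun h (.inl i))).symm
    obtain ⟨j, hj⟩ := Sum.isLeft_iff.mp hl
    exact ⟨j, hj.symm⟩
  obtain ⟨⟨a, b⟩, rfl⟩ := he
  rw [Perm.sumCongrHom_apply, Sum.map_comp_sumCongr] at h
  exact ⟨a, b, rfl, funext fun i => Sum.inl_injective (congrFun h (.inl i)),
    funext fun j => Sum.inr_injective (congrFun h (.inr j))⟩

theorem Sum.card_filter_isLeft_map_comp {γ α β X Y : Type*} [Fintype γ] [Fintype α] [Fintype β]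
    (u : α → X) (v : β → Y) (σ : γ ≃ α ⊕ β) :
    #{i | (Sum.map u v (σ i)).isLeft} = Fintype.card α := by
  simp only [Sum.isLeft_map]
  rw [← Fintype.card_subtype]
  exact Fintype.card_congr ((σ.subtypeEquiv fun _ => Iff.rfl).trans sumIsLeft)

theorem exists_eq_sumMap_comp {γ α β X Y : Type*} [Fintype γ] [Fintype α] [Fintype β]
    (f : γ → X ⊕ Y) (hα : #{i | (f i).isLeft} = Fintype.card α)
    (hγ : Fintype.card γ = Fintype.card α + Fintype.card β) :
    ∃ (u : α → X) (v : β → Y) (σ : γ ≃ α ⊕ β), f = Sum.map u v ∘ σ := by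
  classical
  set P : γ → Prop := fun i => (f i).isLeft
  have hP : Fintype.card {i // P i} = Fintype.card α := by rwa [Fintype.card_subtype]
  have hnP : Fintype.card {i // ¬P i} = Fintype.card β := by
    rw [Fintype.card_subtype_compl, hP, hγ, Nat.add_sub_cancel_left]
  let eα := Fintype.equivOfCardEq hP
  let eβ := Fintype.equivOfCardEq hnP
  refine ⟨fun i => (f (eα.symm i)).getLeft (eα.symm i).2,
    fun j => (f (eβ.symm j)).getRight (Sum.not_isLeft.mp (eβ.symm j).2),
    (sumCompl P).symm.trans (sumCongr eα eβ), funext fun i => ?_⟩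
  by_cases hi : P i <;> simp [sumCompl_symm_apply_of_pos, sumCompl_symm_apply_of_neg, hi]

section YoungSubgroup

variable {p q : ℕ} {X Y : Type*}

abbrev LeftCountOrbits (p q : ℕ) (X Y : Type*) (H : Subgroup (Perm (Fin p ⊕ Fin q))) :=
  Quotient (permSetoidOn H (fun f : Fin p ⊕ Fin q → X ⊕ Y =>
    (Finset.univ.filter fun i => (f i).isLeft).card = p))

def sumMapOrbit (H : Subgroup (Perm (Fin p ⊕ Fin q))) (t : Perm (Fin p ⊕ Fin q))
    (uv : (Fin p → X) × (Fin q → Y)) : LeftCountOrbits p q X Y H :=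
  ⟦⟨Sum.map uv.1 uv.2 ∘ t, by simpa using Sum.card_filter_isLeft_map_comp uv.1 uv.2 t⟩⟧

theorem sumMapOrbit_eq_iff {H : Subgroup (Perm (Fin p ⊕ Fin q))} {t t' : Perm (Fin p ⊕ Fin q)}
    {uv uv' : (Fin p → X) × (Fin q → Y)} :
    sumMapOrbit H t uv = sumMapOrbit H t' uv' ↔
      ∃ h ∈ H, Sum.map uv'.1 uv'.2 = Sum.map uv.1 uv.2 ∘ ⇑(t * h⁻¹ * t'⁻¹) := by
  refine Quotient.eq.trans (exists_congr fun h => and_congr_right fun _ => ?_)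
  change Sum.map uv'.1 uv'.2 ∘ t' = (Sum.map uv.1 uv.2 ∘ t) ∘ ⇑h⁻¹ ↔ _
  rw [Perm.coe_mul (t * h⁻¹), Perm.coe_inv t', ← Function.comp_assoc, Equiv.eq_comp_symm,
    Perm.coe_mul, Function.comp_assoc]

theorem sumMapOrbit_eq_of_rel {H W : Subgroup (Perm (Fin p ⊕ Fin q))} {t : Perm (Fin p ⊕ Fin q)}
    (hW : W ≤ H.map (MulAut.conj t).toMonoidHom) {uv uv' : (Fin p → X) × (Fin q → Y)}
    (huv : prodPermSetoid p q X Y W uv uv') : sumMapOrbit H t uv = sumMapOrbit H t uv' := by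
  obtain ⟨a, b, hab, h1, h2⟩ := huv
  obtain ⟨h, hh, hconj⟩ := hW hab
  refine sumMapOrbit_eq_iff.mpr ⟨h, hh, ?_⟩
  rw [MulEquiv.coe_toMonoidHom, MulAut.conj_apply, Perm.sumCongrHom_apply] at hconj
  rw [h1, h2, ← Sum.map_comp_sumCongr, ← Perm.sumCongr_inv, ← hconj]
  group

variable (L H : Subgroup (Perm (Fin p ⊕ Fin q))) (T : Set (Perm (Fin p ⊕ Fin q)))

def sigmaSumMapOrbit :
    (Σ t : T, Quotient (prodPermSetoid p q X Y
      (L ⊓ H.map (MulAut.conj (t : Perm (Fin p ⊕ Fin q))).toMonoidHom))) →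
      LeftCountOrbits p q X Y H :=
  fun x => Quotient.lift (sumMapOrbit H x.1) (fun _ _ => sumMapOrbit_eq_of_rel inf_le_right) x.2

variable {L H T}

theorem sigmaSumMapOrbit_injective (hL : L = (Perm.sumCongrHom (Fin p) (Fin q)).range)
    (hT : Function.Injective fun t : T => DoubleCoset.mk L H (t : Perm (Fin p ⊕ Fin q))) :
    Function.Injective (sigmaSumMapOrbit (X := X) (Y := Y) L H T) := by
  rintro ⟨t, ⟨uv⟩⟩ ⟨t', ⟨uv'⟩⟩ heq
  change sumMapOrbit H t uv = sumMapOrbit H t' uv' at heq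
  obtain ⟨h, hh, he⟩ := sumMapOrbit_eq_iff.mp heq
  obtain ⟨a, b, hab, hu, hv⟩ := Sum.exists_eq_sumCongr_of_map_eq_map_comp he
  have hL_mem : (t : Perm (Fin p ⊕ Fin q)) * h⁻¹ * (t' : Perm (Fin p ⊕ Fin q))⁻¹ ∈ L :=
    hL ▸ ⟨(a, b), hab.symm⟩
  obtain rfl : t = t' := hT <| (DoubleCoset.eq _ _ _ _).mpr
    ⟨_, L.inv_mem hL_mem, h⁻¹, H.inv_mem hh, by group⟩
  refine Sigma.ext rfl (heq_of_eq (Quotient.sound ⟨a⁻¹, b⁻¹, ⟨hL ▸ ⟨_, rfl⟩, h, hh, ?_⟩,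
    by simpa using hu, by simpa using hv⟩))
  rw [MulEquiv.coe_toMonoidHom, MulAut.conj_apply, Perm.sumCongrHom_apply, ← Perm.sumCongr_inv,
    ← hab]
  group

theorem sigmaSumMapOrbit_surjective (hL : L = (Perm.sumCongrHom (Fin p) (Fin q)).range)
    (hT : Function.Surjective fun t : T => DoubleCoset.mk L H (t : Perm (Fin p ⊕ Fin q))) :
    Function.Surjective (sigmaSumMapOrbit (X := X) (Y := Y) L H T) := by
  rintro ⟨f, hf⟩
  obtain ⟨u, v, σ, rfl⟩ :=
    exists_eq_sumMap_comp (α := Fin p) (β := Fin q) f (by simpa using hf) (by simp)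
  obtain ⟨t, ht⟩ := hT (DoubleCoset.mk L H σ)
  obtain ⟨l, hl, k, hk, hσ⟩ := (DoubleCoset.eq _ _ _ _).mp ht
  obtain ⟨⟨a, b⟩, rfl⟩ := hL ▸ hl
  refine ⟨⟨t, ⟦(u ∘ a, v ∘ b)⟧⟩, ?_⟩
  change sumMapOrbit H t _ = sumMapOrbit H σ (u, v)
  refine sumMapOrbit_eq_iff.mpr ⟨k⁻¹, H.inv_mem hk, ?_⟩
  rw [hσ, show t * k⁻¹⁻¹ * (_ * t * k)⁻¹ = (Perm.sumCongrHom _ _ (a, b))⁻¹ by group,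
    Perm.sumCongrHom_apply, Perm.sumCongr_inv, Sum.map_comp_sumCongr]
  simp [Function.comp_assoc]

end YoungSubgroup

/-- The key bijection in the addition axiom for the β-operations: for a subgroup `H` of
`Equiv.Perm (Fin p ⊕ Fin q)`, the set `A^{p,q}` of `H`-orbits of functions
`Fin p ⊕ Fin q → X ⊕ Y` sending exactly `p` elements into `X` is in bijection with the
disjoint union, over a set `T` of representatives of the double cosets `L\G/H` (with
`L = S_p × S_q` the Young subgroup), of the orbit spaces of `(Fin p → X) × (Fin q → Y)` under
`L ∩ σHσ⁻¹`. -/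
theorem stmt3 (p q : ℕ) (X Y : Type*)
    (L H : Subgroup (Equiv.Perm (Fin p ⊕ Fin q)))
    (hL : L = (Equiv.Perm.sumCongrHom (Fin p) (Fin q)).range)
    (T : Set (Equiv.Perm (Fin p ⊕ Fin q)))
    (hT : Function.Bijective fun t : T => DoubleCoset.mk L H (t : Equiv.Perm (Fin p ⊕ Fin q))) :
    Nonempty (
      Quotient (permSetoidOn H (fun f : Fin p ⊕ Fin q → X ⊕ Y =>
        (Finset.univ.filter fun i => (f i).isLeft).card = p)) ≃
      Σ t : T, Quotient (prodPermSetoid p q X Y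
        (L ⊓ Subgroup.map
          (MulAut.conj (t : Equiv.Perm (Fin p ⊕ Fin q))).toMonoidHom H))) :=
  ⟨(Equiv.ofBijective _ ⟨sigmaSumMapOrbit_injective hL hT.1,
    sigmaSumMapOrbit_surjective hL hT.2⟩).symm⟩
end

section
/- Let p, q be natural numbers, H a subgroup of Equiv.Perm (Fin p) and K a subgroup of Equiv.Perm (Fin q). Let W be the subgroup of Equiv.Perm (Fin p × Fin q) consisting of all permutations of the form (i, j) ↦ (h i, k i j) with h ∈ H and k : Fin p → K (the wreath product H ≀ K). Then for every type X there is a bijection between the W-orbit space of (Fin p × Fin q → X), where W acts by w • F = F ∘ w⁻¹, and the H-orbit space of (Fin p → Q), where Q denotes the K-orbit space of (Fin q → X) (K acting by k • f = f ∘ k⁻¹) and H acts on Fin p → Q by h • g = g ∘ h⁻¹. -/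
/-- The orbit equivalence relation on functions `α → Z` for the action of a subgroup `H` of
`Equiv.Perm α` given by `σ • f = f ∘ ⇑σ⁻¹`. -/
def permSetoid {α : Type*} (H : Subgroup (Equiv.Perm α)) (Z : Type*) : Setoid (α → Z) where
  r f g := ∃ σ ∈ H, g = f ∘ ⇑σ⁻¹
  iseqv := by
    refine ⟨fun f => ⟨1, H.one_mem, by simp⟩, ?_, ?_⟩
    · rintro f g ⟨σ, hσ, rfl⟩
      exact ⟨σ⁻¹, H.inv_mem hσ, by ext x; simp⟩
    · rintro f g h ⟨σ, hσ, rfl⟩ ⟨τ, hτ, rfl⟩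
      exact ⟨τ * σ, H.mul_mem hτ hσ, by ext x; simp⟩

/-- The composition law `β_H ∘ β_K = β_{H ≀ K}` on the level of sets: if `W` is the wreath
product subgroup of `Equiv.Perm (Fin p × Fin q)` consisting of the permutations
`(i, j) ↦ (h i, k i j)` with `h ∈ H` and `k : Fin p → K`, then for every type `X` the `W`-orbit
space of `Fin p × Fin q → X` is in bijection with the `H`-orbit space of `Fin p → Q`, where `Q`
is the `K`-orbit space of `Fin q → X`. -/
theorem stmt4 (p q : ℕ) (H : Subgroup (Equiv.Perm (Fin p)))
    (K : Subgroup (Equiv.Perm (Fin q)))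
    (W : Subgroup (Equiv.Perm (Fin p × Fin q)))
    (hW : ∀ w : Equiv.Perm (Fin p × Fin q), w ∈ W ↔
      ∃ h ∈ H, ∃ k : Fin p → Equiv.Perm (Fin q), (∀ i, k i ∈ K) ∧
        ∀ x : Fin p × Fin q, w x = (h x.1, k x.1 x.2))
    (X : Type*) :
    Nonempty (Quotient (permSetoid W X) ≃
      Quotient (permSetoid H (Quotient (permSetoid K X)))) := by
  classical
  set Q := Quotient (permSetoid K X) with hQ
  let φ : (Fin p × Fin q → X) → (Fin p → Q) :=
    fun F i => Quotient.mk (permSetoid K X) (fun j => F (i, j))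
  have hresp : ∀ F G : Fin p × Fin q → X, (permSetoid W X).r F G →
      Quotient.mk (permSetoid H Q) (φ F) = Quotient.mk (permSetoid H Q) (φ G) := by
    rintro F G ⟨σ, hσ, rfl⟩
    obtain ⟨h, hh, k, hk, heq⟩ := (hW σ⁻¹).mp (W.inv_mem hσ)
    refine Quotient.sound ⟨h⁻¹, H.inv_mem hh, ?_⟩
    funext i
    show Quotient.mk (permSetoid K X) (fun j => F (σ⁻¹ (i, j)))
      = Quotient.mk (permSetoid K X) (fun j => F (h i, j))
    refine Quotient.sound ⟨k i, hk i, ?_⟩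
    funext j
    show F (h i, j) = F (σ⁻¹ (i, (k i)⁻¹ j))
    rw [heq (i, (k i)⁻¹ j)]
    simp
  let Φ : Quotient (permSetoid W X) → Quotient (permSetoid H Q) :=
    Quotient.lift (fun F => Quotient.mk (permSetoid H Q) (φ F)) hresp
  have hinj : Function.Injective Φ := by
    intro a b
    induction a using Quotient.inductionOn with | h F =>
    induction b using Quotient.inductionOn with | h G =>
    intro hab
    obtain ⟨σ, hσ, heq⟩ := Quotient.exact hab
    have hfib : ∀ i : Fin p, ∃ τ : Equiv.Perm (Fin q), τ ∈ K ∧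
        (fun j => G (i, j)) = (fun j => F (σ⁻¹ i, j)) ∘ ⇑τ⁻¹ := by
      intro i
      have := congrFun heq i
      obtain ⟨τ, hτ, hτeq⟩ := Quotient.exact this.symm
      exact ⟨τ, hτ, hτeq⟩
    choose τ hτK hτeq using hfib
    let w : Equiv.Perm (Fin p × Fin q) :=
      { toFun := fun x => (σ x.1, τ (σ x.1) x.2)
        invFun := fun x => (σ⁻¹ x.1, (τ x.1)⁻¹ x.2)
        left_inv := by intro x; simp
        right_inv := by intro x; simp }
    have hwW : w ∈ W := (hW w).mpr ⟨σ, hσ, fun i => τ (σ i), fun i => hτK (σ i), fun x => rfl⟩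
    refine Quotient.sound ⟨w, hwW, ?_⟩
    funext x
    have : w⁻¹ x = (σ⁻¹ x.1, (τ x.1)⁻¹ x.2) := rfl
    show G x = F (w⁻¹ x)
    rw [this]
    have := congrFun (hτeq x.1) x.2
    simpa using this
  have hsurj : Function.Surjective Φ := by
    intro b
    induction b using Quotient.inductionOn with | h g =>
    refine ⟨Quotient.mk (permSetoid W X) (fun x => (g x.1).out x.2), ?_⟩
    show Quotient.mk (permSetoid H Q) _ = _
    congr 1
    funext i
    show Quotient.mk (permSetoid K X) (fun j => (g i).out j) = g i
    conv_rhs => rw [← Quotient.out_eq (g i)]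
  exact ⟨Equiv.ofBijective Φ ⟨hinj, hsurj⟩⟩
end

section
/- For every natural number n ≥ 1 there exists a polynomial P_n in 2n variables with integer coefficients such that for every k ≥ n the following holds in the polynomial ring in one variable u over MvPolynomial (Fin k ⊕ Fin k) ℤ (with variables X_1, …, X_k and Y_1, …, Y_k): the coefficient of u^n in the product Π_{i=1}^{k} Π_{j=1}^{k} (1 + X_i Y_j u) equals P_n evaluated at (e_1(X), …, e_n(X); e_1(Y), …, e_n(Y)), where e_m(X) (resp. e_m(Y)) denotes the m-th elementary symmetric polynomial in the variables X_1, …, X_k (resp. Y_1, …, Y_k). -/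
/-!
Let `L_k` be the coefficient of `u^n` in `∏_{i,j ≤ k} (1 + X_i Y_j u)`. It is symmetric in the `X`'s
and in the `Y`'s separately, so the fundamental theorem of symmetric polynomials, applied in the
`X`'s over `ℤ[Y]` and then to the coefficients in the `Y`'s, writes it as
`Q_k(e_1(X), …, e_k(X); e_1(Y), …, e_k(Y))` for a unique `Q_k`. Since `L_k` has bidegree `(n, n)`
and `e_m(X)`, `e_m(Y)` have bidegrees `(m, 0)`, `(0, m)`, uniqueness forces `Q_k` to be weighted
bihomogeneous of bidegree `(n, n)`, so only `e_1, …, e_n` occur: `L_k = P_k(e_{≤n}(X); e_{≤n}(Y))`.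
Setting `X_i = Y_i = 0` for `i > n` sends `L_k` to `L_n` and the `e_m` in `k` variables to the `e_m`
in `n` variables, so `P_k` and `P_n` agree at level `n`, where the `e_m` are algebraically
independent; hence `P_k = P_n` for all `k ≥ n`.
-/

open Finset MvPolynomial

theorem Polynomial.coeff_prod_one_add_C_mul_X {ι S : Type*} [CommSemiring S] (s : Finset ι)
    (a : ι → S) (m : ℕ) :
    (∏ i ∈ s, (1 + Polynomial.C (a i) * Polynomial.X)).coeff m =
      ∑ t ∈ s.powersetCard m, ∏ i ∈ t, a i := by
  classical
  simp_rw [prod_one_add, prod_mul_distrib, prod_const, ← map_prod, Polynomial.finsetSum_coeff,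
    Polynomial.coeff_C_mul_X_pow, powersetCard_eq_filter, sum_filter, eq_comm]

theorem map_sum_powersetCard_prod {ι κ S T F : Type*} [Fintype ι] [Fintype κ] [CommSemiring S]
    [CommSemiring T] [FunLike F S T] [RingHomClass F S T] (f : F) (e : κ ↪ ι) {a : ι → S}
    {b : κ → T} (hb : ∀ j, f (a (e j)) = b j) (ha : ∀ i, i ∉ Set.range e → f (a i) = 0)
    (m : ℕ) :
    f (∑ t ∈ powersetCard m (univ : Finset ι), ∏ i ∈ t, a i) =
      ∑ t ∈ powersetCard m (univ : Finset κ), ∏ j ∈ t, b j := by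
  classical
  simp_rw [map_sum, map_prod]
  rw [← sum_subset (powersetCard_mono (subset_univ (univ.map e)))]
  · simp [powersetCard_map, hb]
  · intro t htm ht
    obtain ⟨i, hit, hi⟩ :=
      not_subset.1 fun hsub => ht (mem_powersetCard.2 ⟨hsub, (mem_powersetCard.1 htm).2⟩)
    exact prod_eq_zero hit (ha i (by simpa using hi))

namespace MvPolynomial

theorem isWeightedHomogeneous_sum_powersetCard_prod {ι σ R M : Type*} [CommSemiring R]
    [AddCommMonoid M] {w : σ → M} (s : Finset ι) {a : ι → MvPolynomial σ R} {δ : M}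
    (ha : ∀ i ∈ s, (a i).IsWeightedHomogeneous w δ) (m : ℕ) :
    (∑ t ∈ s.powersetCard m, ∏ i ∈ t, a i).IsWeightedHomogeneous w (m • δ) :=
  IsWeightedHomogeneous.sum _ _ _ fun t ht => by
    obtain ⟨hts, rfl⟩ := mem_powersetCard.1 ht
    simpa using IsWeightedHomogeneous.prod t a (fun _ => δ) fun i hi => ha i (hts hi)

section algHom

variable {σ τ R M : Type*} [CommSemiring R] [AddCommMonoid M] {w : τ → M} {w' : σ → M}
  (f : MvPolynomial σ R →ₐ[R] MvPolynomial τ R)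

theorem isWeightedHomogeneous_algHom_monomial
    (hf : ∀ s, (f (X s)).IsWeightedHomogeneous w (w' s)) (d : σ →₀ ℕ) (r : R) :
    (f (monomial d r)).IsWeightedHomogeneous w (Finsupp.weight w' d) := by
  rw [monomial_eq, map_mul, algHom_C, Finsupp.prod, map_prod, Finsupp.weight_apply, Finsupp.sum,
    algebraMap_eq, ← zero_add (∑ _ ∈ _, _)]
  exact (isWeightedHomogeneous_C w r).mul
    (IsWeightedHomogeneous.prod _ _ _ fun s _ => by rw [map_pow]; exact (hf s).pow (d s))

theorem weightedHomogeneousComponent_algHom_apply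
    (hf : ∀ s, (f (X s)).IsWeightedHomogeneous w (w' s)) (c : M) (P : MvPolynomial σ R) :
    weightedHomogeneousComponent w c (f P) = f (weightedHomogeneousComponent w' c P) := by
  classical
  induction P using induction_on' with
  | monomial d r =>
    rw [weightedHomogeneousComponent_of_mem (isWeightedHomogeneous_monomial w' d r rfl),
      weightedHomogeneousComponent_of_mem (isWeightedHomogeneous_algHom_monomial f hf d r)]
    split_ifs <;> simp
  | add p q hp hq => simp only [map_add, hp, hq]

theorem IsWeightedHomogeneous.of_injective_algHom
    (hf : ∀ s, (f (X s)).IsWeightedHomogeneous w (w' s)) (hinj : Function.Injective f)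
    {P : MvPolynomial σ R} {m : M} (h : (f P).IsWeightedHomogeneous w m) :
    P.IsWeightedHomogeneous w' m := by
  classical
  intro d hd
  by_contra hne
  have hcomp : weightedHomogeneousComponent w' (Finsupp.weight w' d) P = 0 := hinj <| by
    rw [← weightedHomogeneousComponent_algHom_apply f hf, h.weightedHomogeneousComponent_ne _ hne,
      map_zero]
  simpa [coeff_weightedHomogeneousComponent, hd] using congr_arg (coeff d) hcomp

end algHom

variable {R σ τ : Type*} [CommSemiring R] {f : σ → τ}

theorem killCompl_X (hf : Function.Injective f) (s : σ) :
    killCompl hf (X (f s) : MvPolynomial τ R) = X s := by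
  rw [← rename_X, killCompl_rename_app]

theorem killCompl_X_of_notMem_range (hf : Function.Injective f) {t : τ} (ht : t ∉ Set.range f) :
    killCompl hf (X t : MvPolynomial τ R) = 0 := by
  simp [killCompl, ht]

theorem sumAlgEquiv_rename_sumMap {σ₁ σ₂ τ₁ τ₂ : Type*} (f₁ : σ₁ → τ₁) (f₂ : σ₂ → τ₂)
    (p : MvPolynomial (σ₁ ⊕ σ₂) R) :
    sumAlgEquiv R τ₁ τ₂ (rename (Sum.map f₁ f₂) p) =
      map (rename (R := R) f₂).toRingHom (rename f₁ (sumAlgEquiv R σ₁ σ₂ p)) := by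
  induction p using MvPolynomial.induction_on with
  | C r => simp
  | add p q hp hq => simp only [map_add, hp, hq]
  | mul_X p v hp => cases v <;> simp [hp]

theorem map_aeval_esymm {S T : Type*} [CommSemiring S] [CommSemiring T] [Fintype σ] {n : ℕ}
    (φ : S →+* T) (q : MvPolynomial (Fin n) S) :
    map φ (aeval (fun i : Fin n => esymm σ S (i + 1)) q) =
      aeval (fun i : Fin n => esymm σ T (i + 1)) (map φ q) := by
  induction q using MvPolynomial.induction_on with
  | C r => simp
  | add p q hp hq => simp only [map_add, hp, hq]
  | mul_X p v hp => simp only [map_mul, map_X, aeval_X, hp, map_esymm]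

theorem rename_esymm_eq_sum [Fintype σ] (f : σ → τ) (m : ℕ) :
    rename f (esymm σ R m) = ∑ t ∈ powersetCard m univ, ∏ i ∈ t, (X (f i) : MvPolynomial τ R) := by
  simp_rw [esymm, map_sum, map_prod, rename_X]

section CommRing

variable {R : Type*} [CommRing R] {n k : ℕ}

theorem injective_aeval_esymm (h : n ≤ k) :
    Function.Injective (aeval (R := R) (fun i : Fin n => esymm (Fin k) R ((i : ℕ) + 1))) :=
  fun p q hpq => esymmAlgHom_fin_injective R h <| Subtype.ext <| by
    simpa only [esymmAlgHom_apply] using hpq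

theorem exists_aeval_esymm_eq {p : MvPolynomial (Fin k) R} (hp : p.IsSymmetric) :
    ∃ q, aeval (R := R) (fun i : Fin k => esymm (Fin k) R ((i : ℕ) + 1)) q = p := by
  obtain ⟨q, hq⟩ := (esymmAlgHom_fin_bijective R k).2 ⟨p, hp⟩
  exact ⟨q, by simpa only [esymmAlgHom_apply] using congr_arg Subtype.val hq⟩

end CommRing

end MvPolynomial

namespace DualCauchy

section CommSemiring

variable (R : Type*) [CommSemiring R]

/-- `esymmPair R n k P = P(e_1(X), …, e_n(X); e_1(Y), …, e_n(Y))`, where `X_i = X (inl i)`,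
`Y_j = X (inr j)` for `i, j < k`. -/
noncomputable def esymmPair (n k : ℕ) :
    MvPolynomial (Fin n ⊕ Fin n) R →ₐ[R] MvPolynomial (Fin k ⊕ Fin k) R :=
  aeval (Sum.elim (fun m : Fin n => rename Sum.inl (esymm (Fin k) R ((m : ℕ) + 1)))
    (fun m : Fin n => rename Sum.inr (esymm (Fin k) R ((m : ℕ) + 1))))

noncomputable def dualCauchyCoeff (n k : ℕ) : MvPolynomial (Fin k ⊕ Fin k) R :=
  (∏ i : Fin k, ∏ j : Fin k,
    (1 + Polynomial.C (X (Sum.inl i) * X (Sum.inr j) : MvPolynomial (Fin k ⊕ Fin k) R) *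
      Polynomial.X)).coeff n

def bidegree (k : ℕ) : Fin k ⊕ Fin k → ℕ × ℕ :=
  Sum.elim (fun _ => (1, 0)) (fun _ => (0, 1))

def esymmBidegree (n : ℕ) : Fin n ⊕ Fin n → ℕ × ℕ :=
  Sum.elim (fun m => ((m : ℕ) + 1, 0)) (fun m => (0, (m : ℕ) + 1))

variable {R} {n k l : ℕ}

theorem dualCauchyCoeff_eq_sum :
    dualCauchyCoeff R n k = ∑ t ∈ powersetCard n (univ : Finset (Fin k × Fin k)),
      ∏ p ∈ t, (X (Sum.inl p.1) * X (Sum.inr p.2) : MvPolynomial (Fin k ⊕ Fin k) R) := by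
  rw [dualCauchyCoeff, ← Fintype.prod_prod_type', Polynomial.coeff_prod_one_add_C_mul_X]

theorem rename_dualCauchyCoeff (e₁ e₂ : Equiv.Perm (Fin k)) :
    rename (Sum.map e₁ e₂) (dualCauchyCoeff R n k) = dualCauchyCoeff R n k := by
  rw [dualCauchyCoeff_eq_sum]
  exact map_sum_powersetCard_prod _ (e₁.prodCongr e₂).symm.toEmbedding (fun p => by simp)
    (fun p hp => (hp ⟨e₁.prodCongr e₂ p, Equiv.symm_apply_apply _ _⟩).elim) n

theorem isWeightedHomogeneous_dualCauchyCoeff :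
    (dualCauchyCoeff R n k).IsWeightedHomogeneous (bidegree k) (n, n) := by
  rw [dualCauchyCoeff_eq_sum]
  simpa using isWeightedHomogeneous_sum_powersetCard_prod univ (δ := (1, 1))
    (fun (p : Fin k × Fin k) _ => (isWeightedHomogeneous_X R (bidegree k) (Sum.inl p.1)).mul
      (isWeightedHomogeneous_X R _ (Sum.inr p.2))) n

theorem isWeightedHomogeneous_esymmPair_X (v : Fin n ⊕ Fin n) :
    (esymmPair R n k (X v)).IsWeightedHomogeneous (bidegree k) (esymmBidegree n v) := by
  rcases v with m | m
  · simpa [esymmPair, rename_esymm_eq_sum, esymmBidegree] using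
      isWeightedHomogeneous_sum_powersetCard_prod (univ : Finset (Fin k))
        (fun i _ => isWeightedHomogeneous_X R (bidegree k) (Sum.inl i)) ((m : ℕ) + 1)
  · simpa [esymmPair, rename_esymm_eq_sum, esymmBidegree] using
      isWeightedHomogeneous_sum_powersetCard_prod (univ : Finset (Fin k))
        (fun i _ => isWeightedHomogeneous_X R (bidegree k) (Sum.inr i)) ((m : ℕ) + 1)

theorem castLE_sumMap_injective (h : l ≤ k) :
    Function.Injective (Sum.map (Fin.castLE h) (Fin.castLE h)) :=
  (Fin.castLE_injective h).sumMap (Fin.castLE_injective h)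

variable (R) in
noncomputable def restrict (h : l ≤ k) :
    MvPolynomial (Fin k ⊕ Fin k) R →ₐ[R] MvPolynomial (Fin l ⊕ Fin l) R :=
  killCompl (castLE_sumMap_injective h)

theorem restrict_X_inl_of_notMem (h : l ≤ k) {i : Fin k} (hi : i ∉ Set.range (Fin.castLE h)) :
    restrict R h (X (Sum.inl i)) = 0 := by
  refine killCompl_X_of_notMem_range _ ?_
  rintro ⟨j | j, hj⟩
  · exact hi ⟨j, Sum.inl_injective hj⟩
  · exact Sum.inr_ne_inl hj

theorem restrict_X_inr_of_notMem (h : l ≤ k) {i : Fin k} (hi : i ∉ Set.range (Fin.castLE h)) :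
    restrict R h (X (Sum.inr i)) = 0 := by
  refine killCompl_X_of_notMem_range _ ?_
  rintro ⟨j | j, hj⟩
  · exact Sum.inl_ne_inr hj
  · exact hi ⟨j, Sum.inr_injective hj⟩

theorem restrict_dualCauchyCoeff (h : l ≤ k) :
    restrict R h (dualCauchyCoeff R n k) = dualCauchyCoeff R n l := by
  simp_rw [dualCauchyCoeff_eq_sum]
  refine map_sum_powersetCard_prod _ ((Fin.castLEEmb h).prodMap (Fin.castLEEmb h))
    (fun p => ?_) (fun p hp => ?_) n
  · rw [map_mul]
    exact congr_arg₂ (· * ·) (killCompl_X _ (Sum.inl p.1)) (killCompl_X _ (Sum.inr p.2))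
  · rw [map_mul]
    by_cases h₁ : p.1 ∈ Set.range (Fin.castLE h)
    · obtain ⟨i, hi⟩ := h₁
      have h₂ : p.2 ∉ Set.range (Fin.castLE h) := fun ⟨j, hj⟩ => hp ⟨(i, j), Prod.ext hi hj⟩
      rw [restrict_X_inr_of_notMem h h₂, mul_zero]
    · rw [restrict_X_inl_of_notMem h h₁, zero_mul]

theorem restrict_esymmPair (h : l ≤ k) (P : MvPolynomial (Fin n ⊕ Fin n) R) :
    restrict R h (esymmPair R n k P) = esymmPair R n l P := by
  rw [esymmPair, esymmPair, ← AlgHom.comp_apply, comp_aeval]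
  refine congr_arg (fun g => aeval g P) (funext fun v => ?_)
  rcases v with m | m <;> simp only [Sum.elim_inl, Sum.elim_inr, rename_esymm_eq_sum]
  · exact map_sum_powersetCard_prod _ (Fin.castLEEmb h) (fun i => killCompl_X _ (Sum.inl i))
      (fun i hi => restrict_X_inl_of_notMem h hi) _
  · exact map_sum_powersetCard_prod _ (Fin.castLEEmb h) (fun i => killCompl_X _ (Sum.inr i))
      (fun i hi => restrict_X_inr_of_notMem h hi) _

theorem exists_rename_castLE_eq (h : n ≤ k) {Q : MvPolynomial (Fin k ⊕ Fin k) R}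
    (hQ : Q.IsWeightedHomogeneous (esymmBidegree k) (n, n)) :
    ∃ P, rename (Sum.map (Fin.castLE h) (Fin.castLE h)) P = Q := by
  refine exists_rename_eq_of_vars_subset_range Q _ (castLE_sumMap_injective h) fun v hv => ?_
  obtain ⟨d, hd, hvd⟩ := (mem_vars_iff_mem_support v).1 hv
  have hle : esymmBidegree k v ≤ (n, n) :=
    hQ (mem_support_iff.1 hd) ▸ Finsupp.le_weight_of_ne_zero' _ (Finsupp.mem_support_iff.1 hvd)
  rcases v with i | i
  · exact ⟨Sum.inl ⟨i, Nat.lt_of_succ_le hle.1⟩, rfl⟩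
  · exact ⟨Sum.inr ⟨i, Nat.lt_of_succ_le hle.2⟩, rfl⟩

theorem esymmPair_rename_castLE (h : n ≤ k) (P : MvPolynomial (Fin n ⊕ Fin n) R) :
    esymmPair R k k (rename (Sum.map (Fin.castLE h) (Fin.castLE h)) P) = esymmPair R n k P := by
  rw [esymmPair, aeval_rename, Sum.elim_comp_map]
  rfl

end CommSemiring

section CommRing

variable {R : Type*} [CommRing R] {n k : ℕ}

theorem sumAlgEquiv_esymmPair (P : MvPolynomial (Fin n ⊕ Fin n) R) :
    sumAlgEquiv R _ _ (esymmPair R n k P) =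
      aeval (R := MvPolynomial (Fin k) R)
        (fun i : Fin n => esymm (Fin k) (MvPolynomial (Fin k) R) ((i : ℕ) + 1))
        (map (aeval (R := R) fun j : Fin n => esymm (Fin k) R ((j : ℕ) + 1)).toRingHom
          (sumAlgEquiv R _ _ P)) := by
  induction P using MvPolynomial.induction_on with
  | C r => simp
  | add p q hp hq => simp only [map_add, hp, hq]
  | mul_X p v hp =>
    rw [map_mul, map_mul, hp, map_mul, map_mul, map_mul]
    congr 1
    rcases v with m | m
    · simp only [esymmPair, aeval_X, Sum.elim_inl, sumAlgEquiv_X_inl, map_X]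
      simpa [map_esymm] using
        AlgHom.congr_fun (sumAlgEquiv_comp_rename_inl R (Fin k) (Fin k)) (esymm (Fin k) R (m + 1))
    · simp only [esymmPair, aeval_X, Sum.elim_inr, sumAlgEquiv_X_inr, map_C]
      simpa using
        AlgHom.congr_fun (sumAlgEquiv_comp_rename_inr R (Fin k) (Fin k)) (esymm (Fin k) R (m + 1))

theorem esymmPair_injective (h : n ≤ k) : Function.Injective (esymmPair R n k) := by
  intro P Q hPQ
  apply (sumAlgEquiv R _ _).injective
  refine map_injective _ (injective_aeval_esymm h) (injective_aeval_esymm h ?_)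
  simpa only [sumAlgEquiv_esymmPair] using congr_arg (sumAlgEquiv R _ _) hPQ

theorem exists_esymmPair_eq {p : MvPolynomial (Fin k ⊕ Fin k) R}
    (hp : ∀ e₁ e₂ : Equiv.Perm (Fin k), rename (Sum.map e₁ e₂) p = p) :
    ∃ P, esymmPair R k k P = p := by
  have hsymm : (sumAlgEquiv R _ _ p).IsSymmetric := fun e => by
    simpa [sumAlgEquiv_rename_sumMap, map_id] using congr_arg (sumAlgEquiv R _ _) (hp e 1)
  obtain ⟨q, hq⟩ := exists_aeval_esymm_eq hsymm
  have hcoeffs : (q.coeffs : Set (MvPolynomial (Fin k) R)) ⊆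
      Set.range (aeval (R := R) fun j : Fin k => esymm (Fin k) R ((j : ℕ) + 1)).toRingHom := by
    intro c hc
    obtain ⟨u, hu, rfl⟩ := mem_coeffs_iff.1 hc
    refine exists_aeval_esymm_eq fun e => ?_
    have hfix : map (rename e).toRingHom q = q := injective_aeval_esymm le_rfl <| by
      rw [← map_aeval_esymm, hq]
      simpa [sumAlgEquiv_rename_sumMap, map_id] using congr_arg (sumAlgEquiv R _ _) (hp 1 e)
    simpa only [coeff_map, AlgHom.toRingHom_eq_coe, RingHom.coe_coe] using congr_arg (coeff u) hfix
  obtain ⟨q', rfl⟩ := mem_range_map_iff_coeffs_subset.2 hcoeffs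
  refine ⟨(sumAlgEquiv R _ _).symm q', (sumAlgEquiv R _ _).injective ?_⟩
  rw [sumAlgEquiv_esymmPair, AlgEquiv.apply_symm_apply, hq]

theorem exists_esymmPair_eq_dualCauchyCoeff_of_le (h : n ≤ k) :
    ∃ P, esymmPair R n k P = dualCauchyCoeff R n k := by
  obtain ⟨Q, hQ⟩ := exists_esymmPair_eq (rename_dualCauchyCoeff (R := R) (n := n) (k := k))
  have hQdeg : Q.IsWeightedHomogeneous (esymmBidegree k) (n, n) :=
    IsWeightedHomogeneous.of_injective_algHom _ isWeightedHomogeneous_esymmPair_X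
      (esymmPair_injective le_rfl)
      (by rw [hQ]; exact isWeightedHomogeneous_dualCauchyCoeff)
  obtain ⟨P, rfl⟩ := exists_rename_castLE_eq h hQdeg
  exact ⟨P, by rw [← esymmPair_rename_castLE h, hQ]⟩

theorem exists_forall_esymmPair_eq_dualCauchyCoeff (n : ℕ) :
    ∃ P, ∀ k, n ≤ k → esymmPair R n k P = dualCauchyCoeff R n k := by
  obtain ⟨P, hP⟩ := exists_esymmPair_eq_dualCauchyCoeff_of_le (R := R) (le_refl n)
  refine ⟨P, fun k hk => ?_⟩
  obtain ⟨Pk, hPk⟩ := exists_esymmPair_eq_dualCauchyCoeff_of_le (R := R) hk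
  have hPkP : Pk = P := esymmPair_injective le_rfl <| by
    rw [hP, ← restrict_esymmPair hk, hPk, restrict_dualCauchyCoeff]
  rw [← hPkP, hPk]

end CommRing

end DualCauchy

theorem stmt14_general (n : ℕ) :
    ∃ P : MvPolynomial (Fin n ⊕ Fin n) ℤ,
      ∀ k : ℕ, n ≤ k →
        Polynomial.coeff
          (∏ i : Fin k, ∏ j : Fin k,
            (1 + Polynomial.C (MvPolynomial.X (Sum.inl i) * MvPolynomial.X (Sum.inr j) :
                MvPolynomial (Fin k ⊕ Fin k) ℤ) * Polynomial.X)) n =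
        MvPolynomial.aeval
          (Sum.elim
            (fun m : Fin n =>
              MvPolynomial.rename Sum.inl (MvPolynomial.esymm (Fin k) ℤ ((m : ℕ) + 1)))
            (fun m : Fin n =>
              MvPolynomial.rename Sum.inr (MvPolynomial.esymm (Fin k) ℤ ((m : ℕ) + 1)))) P := by
  obtain ⟨P, hP⟩ := DualCauchy.exists_forall_esymmPair_eq_dualCauchyCoeff (R := ℤ) n
  exact ⟨P, fun k hk => (hP k hk).symm⟩

/-- For each `n ≥ 1` there is a universal integer polynomial `P_n` in `2n` variables such that
for every `k ≥ n`, the coefficient of `u^n` in `Π_{i,j=1}^{k} (1 + X_i Y_j u)` equals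
`P_n (e_1(X), …, e_n(X); e_1(Y), …, e_n(Y))`, with `e_m` the elementary symmetric polynomials. -/
theorem stmt14 (n : ℕ) (hn : 1 ≤ n) :
    ∃ P : MvPolynomial (Fin n ⊕ Fin n) ℤ,
      ∀ k : ℕ, n ≤ k →
        Polynomial.coeff
          (∏ i : Fin k, ∏ j : Fin k,
            (1 + Polynomial.C (MvPolynomial.X (Sum.inl i) * MvPolynomial.X (Sum.inr j) :
                MvPolynomial (Fin k ⊕ Fin k) ℤ) * Polynomial.X)) n =
        MvPolynomial.aeval
          (Sum.elim
            (fun m : Fin n =>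
              MvPolynomial.rename Sum.inl (MvPolynomial.esymm (Fin k) ℤ ((m : ℕ) + 1)))
            (fun m : Fin n =>
              MvPolynomial.rename Sum.inr (MvPolynomial.esymm (Fin k) ℤ ((m : ℕ) + 1)))) P :=
  stmt14_general n
end
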